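/- arXiv:1011.6491 — 3 statements merged into one kernel-verified Lean document; each statement's English description precedes it below -/
import Mathlib

section
/- If K and L are rational languages over A, then their shuffle K ⧢ L is rational, where the shuffle of words u and v is the set of all words u₁v₁⋯uₙvₙ with u = u₁⋯uₙ and v = v₁⋯vₙ. -/
/-- The shuffle `u ⧢ v` of two words: all words `u₁v₁⋯uₙvₙ` obtained from
factorizations `u = u₁⋯uₙ` and `v = v₁⋯vₙ`. -/
def wordShuffle {A : Type*} (u v : List A) : Set (List A) :=
  {w | ∃ l : List (List A × List A),
    u = (l.map Prod.fst).flatten ∧ v = (l.map Prod.snd).flatten ∧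
    w = (l.map fun p => p.1 ++ p.2).flatten}

/-- Inductive characterization of the shuffle relation. -/
inductive Sh {A : Type*} : List A → List A → List A → Prop
  | nil : Sh [] [] []
  | left (a : A) {u v w : List A} : Sh u v w → Sh (a :: u) v (a :: w)
  | right (b : A) {u v w : List A} : Sh u v w → Sh u (b :: v) (b :: w)

theorem Sh.prepend_left {A : Type*} (x : List A) {u v w : List A} (h : Sh u v w) :
    Sh (x ++ u) v (x ++ w) := by
  induction x with
  | nil => simpa
  | cons a x ih => exact Sh.left a ih

theorem Sh.prepend_right {A : Type*} (y : List A) {u v w : List A} (h : Sh u v w) :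
    Sh u (y ++ v) (y ++ w) := by
  induction y with
  | nil => simpa
  | cons b y ih => exact Sh.right b ih

theorem sh_nil_iff {A : Type*} {u v : List A} : Sh u v ([] : List A) ↔ u = [] ∧ v = [] := by
  constructor
  · rintro h; cases h; exact ⟨rfl, rfl⟩
  · rintro ⟨rfl, rfl⟩; exact Sh.nil

theorem sh_cons_iff {A : Type*} {u v w : List A} {a : A} :
    Sh u v (a :: w) ↔ (∃ u', u = a :: u' ∧ Sh u' v w) ∨ (∃ v', v = a :: v' ∧ Sh u v' w) := by
  constructor
  · intro h
    cases h with
    | left _ h => exact Or.inl ⟨_, rfl, h⟩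
    | right _ h => exact Or.inr ⟨_, rfl, h⟩
  · rintro (⟨u', rfl, h⟩ | ⟨v', rfl, h⟩)
    · exact Sh.left a h
    · exact Sh.right a h

theorem mem_wordShuffle_iff_sh {A : Type*} {u v w : List A} :
    w ∈ wordShuffle u v ↔ Sh u v w := by
  constructor
  · rintro ⟨l, rfl, rfl, rfl⟩
    induction l with
    | nil => exact Sh.nil
    | cons p l ih =>
      simp only [List.map_cons, List.flatten_cons, List.append_assoc]
      exact Sh.prepend_left p.1 (Sh.prepend_right p.2 ih)
  · intro h
    induction h with
    | nil => exact ⟨[], rfl, rfl, rfl⟩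
    | left a h ih =>
      obtain ⟨l, hu, hv, hw⟩ := ih
      exact ⟨([a], []) :: l, by simp [hu], by simp [hv], by simp [hw]⟩
    | right b h ih =>
      obtain ⟨l, hu, hv, hw⟩ := ih
      exact ⟨([], [b]) :: l, by simp [hu], by simp [hv], by simp [hw]⟩

/-- The shuffle NFA of two DFAs. -/
def shuffleNFA {A σ₁ σ₂ : Type*} (M₁ : DFA A σ₁) (M₂ : DFA A σ₂) : NFA A (σ₁ × σ₂) where
  step := fun s a => {(M₁.step s.1 a, s.2), (s.1, M₂.step s.2 a)}
  start := {(M₁.start, M₂.start)}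
  accept := {s | s.1 ∈ M₁.accept ∧ s.2 ∈ M₂.accept}

theorem shuffleNFA_evalFrom {A σ₁ σ₂ : Type*} (M₁ : DFA A σ₁) (M₂ : DFA A σ₂)
    (w : List A) (S : Set (σ₁ × σ₂)) (s : σ₁ × σ₂) :
    s ∈ (shuffleNFA M₁ M₂).evalFrom S w ↔
      ∃ s₀ ∈ S, ∃ u v, Sh u v w ∧ s = (M₁.evalFrom s₀.1 u, M₂.evalFrom s₀.2 v) := by
  induction w generalizing S with
  | nil =>
    simp only [NFA.evalFrom_nil]
    constructor
    · intro hs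
      exact ⟨s, hs, [], [], Sh.nil, rfl⟩
    · rintro ⟨s₀, hs₀, u, v, hsh, rfl⟩
      obtain ⟨rfl, rfl⟩ := sh_nil_iff.mp hsh
      exact hs₀
  | cons a w ih =>
    have : (shuffleNFA M₁ M₂).evalFrom S (a :: w) =
        (shuffleNFA M₁ M₂).evalFrom ((shuffleNFA M₁ M₂).stepSet S a) w := rfl
    rw [this, ih]
    constructor
    · rintro ⟨s₁, hs₁, u, v, hsh, rfl⟩
      rw [NFA.mem_stepSet] at hs₁
      obtain ⟨s₀, hs₀, hstep⟩ := hs₁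
      simp only [shuffleNFA, Set.mem_insert_iff, Set.mem_singleton_iff] at hstep
      rcases hstep with rfl | rfl
      · exact ⟨s₀, hs₀, a :: u, v, Sh.left a hsh, rfl⟩
      · exact ⟨s₀, hs₀, u, a :: v, Sh.right a hsh, rfl⟩
    · rintro ⟨s₀, hs₀, u, v, hsh, rfl⟩
      rw [sh_cons_iff] at hsh
      rcases hsh with ⟨u', rfl, hsh⟩ | ⟨v', rfl, hsh⟩
      · refine ⟨(M₁.step s₀.1 a, s₀.2), ?_, u', v, hsh, rfl⟩
        rw [NFA.mem_stepSet]
        exact ⟨s₀, hs₀, Or.inl rfl⟩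
      · refine ⟨(s₀.1, M₂.step s₀.2 a), ?_, u, v', hsh, rfl⟩
        rw [NFA.mem_stepSet]
        exact ⟨s₀, hs₀, Or.inr rfl⟩

/-- If `K` and `L` are rational, then their shuffle `K ⧢ L` is rational. -/
theorem shuffle_isRegular {A : Type} [Fintype A] (K L : Language A)
    (hK : K.IsRegular) (hL : L.IsRegular) :
    Language.IsRegular {w : List A | ∃ u ∈ K, ∃ v ∈ L, w ∈ wordShuffle u v} := by
  obtain ⟨σ₁, _, M₁, rfl⟩ := hK
  obtain ⟨σ₂, _, M₂, rfl⟩ := hL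
  classical
  refine ⟨Set (σ₁ × σ₂), inferInstance, (shuffleNFA M₁ M₂).toDFA, ?_⟩
  rw [NFA.toDFA_correct]
  ext w
  rw [NFA.mem_accepts]
  constructor
  · rintro ⟨s, hacc, hev⟩
    rw [shuffleNFA_evalFrom] at hev
    obtain ⟨s₀, hs₀, u, v, hsh, rfl⟩ := hev
    obtain ⟨h1, h2⟩ := hacc
    have hs₀' : s₀ = (M₁.start, M₂.start) := hs₀
    subst hs₀'
    exact ⟨u, h1, v, h2, mem_wordShuffle_iff_sh.mpr hsh⟩
  · rintro ⟨u, hu, v, hv, hw⟩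
    rw [mem_wordShuffle_iff_sh] at hw
    refine ⟨(M₁.evalFrom M₁.start u, M₂.evalFrom M₂.start v), ⟨hu, hv⟩, ?_⟩
    rw [shuffleNFA_evalFrom]
    exact ⟨(M₁.start, M₂.start), rfl, u, v, hw, rfl⟩
end

section
/- Myhill–Nerode theorem: A language L ⊆ A* over a finite alphabet is rational (accepted by a finite automaton) if and only if the equivalence relation ≡_L (u ≡_L v iff u⁻¹L = v⁻¹L) has finitely many equivalence classes. -/
/-- The Myhill–Nerode equivalence: `u ≡_L v` iff `u⁻¹L = v⁻¹L`. -/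
def mnSetoid {A : Type*} (L : Language A) : Setoid (List A) where
  r u v := {w : List A | u ++ w ∈ L} = {w : List A | v ++ w ∈ L}
  iseqv := ⟨fun _ => rfl, Eq.symm, Eq.trans⟩

/-- Myhill–Nerode theorem: a language over a finite alphabet is rational iff
its Myhill–Nerode equivalence has finitely many classes. -/
theorem myhillNerode {A : Type} [Fintype A] (L : Language A) :
    L.IsRegular ↔ Finite (Quotient (mnSetoid L)) := by
  constructor
  · rintro ⟨σ, hσ, M, rfl⟩
    -- map classes to leftQuotient sets, realized as states
    have key : ∀ u : List A, {w : List A | u ++ w ∈ M.accepts} =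
        {w : List A | M.evalFrom (M.eval u) w ∈ M.accept} := by
      intro u
      ext w
      simp [DFA.mem_accepts, DFA.eval, DFA.evalFrom_of_append]
    let g : σ → Set (List A) := fun s => {w | M.evalFrom s w ∈ M.accept}
    let f : Quotient (mnSetoid M.accepts) → Set.range g :=
      Quotient.lift (fun u => ⟨{w : List A | u ++ w ∈ M.accepts},
        ⟨M.eval u, (key u).symm⟩⟩) (fun u v h => by
          exact Subtype.ext h)
    have hf : Function.Injective f := by
      rintro ⟨u⟩ ⟨v⟩ h
      exact Quotient.sound (congrArg Subtype.val h)
    have : Finite (Set.range g) := Set.finite_range g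
    exact Finite.of_injective f hf
  · intro h
    refine ⟨Quotient (mnSetoid L), Fintype.ofFinite _, ?_⟩
    have step_wd : ∀ (a : A) (u v : List A), (mnSetoid L).r u v →
        (⟦u ++ [a]⟧ : Quotient (mnSetoid L)) = ⟦v ++ [a]⟧ := by
      intro a u v h
      apply Quotient.sound
      show {w : List A | (u ++ [a]) ++ w ∈ L} = {w : List A | (v ++ [a]) ++ w ∈ L}
      ext w
      have hu : (u ++ [a]) ++ w = u ++ (a :: w) := by simp
      have hv : (v ++ [a]) ++ w = v ++ (a :: w) := by simp
      simp only [Set.mem_setOf_eq, hu, hv]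
      exact Iff.of_eq (congrFun (congrArg Membership.mem h) (a :: w))
    let M : DFA A (Quotient (mnSetoid L)) :=
      ⟨fun q a => Quotient.lift (fun u => (⟦u ++ [a]⟧ : Quotient (mnSetoid L)))
        (fun u v h => step_wd a u v h) q,
      ⟦[]⟧,
      {q | Quotient.lift (fun u => u ∈ L) (fun u v h => by
        have := congrFun (congrArg Membership.mem h) ([] : List A)
        simpa using this) q}⟩
    refine ⟨M, ?_⟩
    have heval : ∀ u : List A, M.eval u = ⟦u⟧ := by
      intro u
      induction u using List.reverseRecOn with
      | nil => rfl
      | append_singleton xs a ih =>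
        have : M.eval (xs ++ [a]) = M.step (M.eval xs) a := by
          exact M.eval_append_singleton xs a
        rw [this, ih]
        rfl
    ext u
    rw [DFA.mem_accepts, heval u]
    rfl
end

section
/- In a complete deterministic automaton with state set Q (|Q| ≥ 2), two states p and q are equivalent (accept the same set of words) if and only if they are m-equivalent for m = |Q| − 2, i.e., for every word v of length at most |Q| − 2, δ(p,v) is final iff δ(q,v) is final. -/
/-- `k`-equivalence of states: agree on all words of length at most `k`. -/
def DEqAux {α σ : Type*} (M : DFA α σ) (k : ℕ) (p q : σ) : Prop :=
  ∀ v : List α, v.length ≤ k → (M.evalFrom p v ∈ M.accept ↔ M.evalFrom q v ∈ M.accept)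

theorem dEqAux_mono {α σ : Type*} (M : DFA α σ) {k m : ℕ} (h : k ≤ m) {p q : σ}
    (hpq : DEqAux M m p q) : DEqAux M k p q := fun v hv => hpq v (hv.trans h)

theorem dEqAux_succ {α σ : Type*} (M : DFA α σ) {k : ℕ} {p q : σ} :
    DEqAux M (k+1) p q ↔ DEqAux M k p q ∧ ∀ a, DEqAux M k (M.step p a) (M.step q a) := by
  constructor
  · intro h
    refine ⟨dEqAux_mono M (Nat.le_succ k) h, fun a v hv => ?_⟩
    have := h (a :: v) (by simpa using Nat.succ_le_succ hv)
    simpa [DFA.evalFrom] using this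
  · rintro ⟨h0, h1⟩ v hv
    match v with
    | [] => exact h0 [] (by simp)
    | a :: w =>
      have := h1 a w (by simpa using Nat.succ_le_succ_iff.mp hv)
      simpa [DFA.evalFrom] using this

/-- The setoid of `k`-equivalence. -/
def dSetoidAux {α σ : Type*} (M : DFA α σ) (k : ℕ) : Setoid σ where
  r := DEqAux M k
  iseqv := ⟨fun _ _ _ => Iff.rfl, fun h v hv => (h v hv).symm,
    fun h h' v hv => (h v hv).trans (h' v hv)⟩

theorem dEqAux_of_stab {α σ : Type*} (M : DFA α σ) {k : ℕ}
    (hs : ∀ p q : σ, DEqAux M k p q → DEqAux M (k+1) p q) :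
    ∀ m, ∀ p q : σ, DEqAux M k p q → DEqAux M (k+m) p q := by
  intro m
  induction m with
  | zero => exact fun p q h => h
  | succ m ih =>
    intro p q h
    rw [show k + (m+1) = (k+m)+1 from rfl, dEqAux_succ]
    exact ⟨ih p q h, fun a => ih _ _ (((dEqAux_succ M).mp (hs p q h)).2 a)⟩

theorem natCard_lt_of_surj_not_inj {A B : Type*} [Finite A] (f : A → B)
    (hs : Function.Surjective f) (hni : ¬ Function.Injective f) :
    Nat.card B < Nat.card A := by
  have : Finite B := Finite.of_surjective f hs
  cases nonempty_fintype A
  cases nonempty_fintype B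
  simp only [Nat.card_eq_fintype_card]
  exact Fintype.card_lt_of_surjective_not_injective f hs hni

/-- In a complete deterministic automaton with state set `Q` (`|Q| ≥ 2`), two states
are equivalent iff they are `(|Q| - 2)`-equivalent: it suffices to test words of
length at most `|Q| - 2`. -/
theorem dfa_state_equiv_iff_short_words {α σ : Type*} [Fintype σ] (M : DFA α σ)
    (hQ : 2 ≤ Fintype.card σ) (p q : σ) :
    {v : List α | M.evalFrom p v ∈ M.accept} = {v : List α | M.evalFrom q v ∈ M.accept} ↔
    ∀ v : List α, v.length ≤ Fintype.card σ - 2 →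
      (M.evalFrom p v ∈ M.accept ↔ M.evalFrom q v ∈ M.accept) := by
  classical
  set n := Fintype.card σ with hn
  constructor
  · intro h v _
    have : (v ∈ {v : List α | M.evalFrom p v ∈ M.accept}) ↔
        v ∈ {v : List α | M.evalFrom q v ∈ M.accept} := by rw [h]
    simpa using this
  · intro hE
    have hE' : DEqAux M (n - 2) p q := hE
    suffices key : ∀ v : List α, (M.evalFrom p v ∈ M.accept ↔ M.evalFrom q v ∈ M.accept) by
      ext v; simpa using key v
    by_cases hF : ∀ s t : σ, s ∈ M.accept ↔ t ∈ M.accept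
    · exact fun v => hF _ _
    · push_neg at hF
      obtain ⟨s, t, hst⟩ := hF
      -- two distinct classes at level 0
      have hbase : 2 ≤ Nat.card (Quotient (dSetoidAux M 0)) := by
        have hne : (Quotient.mk (dSetoidAux M 0) s) ≠ Quotient.mk (dSetoidAux M 0) t := by
          intro h
          have := Quotient.exact h
          have h0 : s ∈ M.accept ↔ t ∈ M.accept := by
            simpa [DFA.evalFrom] using this [] (le_refl 0)
          tauto
        have : Nontrivial (Quotient (dSetoidAux M 0)) := ⟨_, _, hne⟩
        exact Finite.one_lt_card_iff_nontrivial.mpr this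
      have hupper : ∀ j, Nat.card (Quotient (dSetoidAux M j)) ≤ n := by
        intro j
        have := Nat.card_le_card_of_surjective
          (Quotient.mk (dSetoidAux M j)) Quotient.mk_surjective
        simpa [Nat.card_eq_fintype_card] using this
      have hstab : ∃ k ≤ n - 2, ∀ p' q' : σ, DEqAux M k p' q' → DEqAux M (k+1) p' q' := by
        by_contra hc
        push_neg at hc
        have hstep : ∀ j ≤ n - 2, Nat.card (Quotient (dSetoidAux M j)) <
            Nat.card (Quotient (dSetoidAux M (j+1))) := by
          intro j hj
          obtain ⟨p', q', hpq, hnpq⟩ := hc j hj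
          refine natCard_lt_of_surj_not_inj
            (Quotient.map' (fun x => x)
              (fun a b hab => dEqAux_mono M (Nat.le_succ j) hab) :
              Quotient (dSetoidAux M (j+1)) → Quotient (dSetoidAux M j)) ?_ ?_
          · intro x
            obtain ⟨a, rfl⟩ := Quotient.mk_surjective x
            exact ⟨Quotient.mk _ a, rfl⟩
          · intro hinj
            apply hnpq
            have : (Quotient.mk (dSetoidAux M (j+1)) p') = Quotient.mk _ q' := by
              apply hinj
              exact Quotient.sound hpq
            exact Quotient.exact this
        have hgrow : ∀ j ≤ n - 1, 2 + j ≤ Nat.card (Quotient (dSetoidAux M j)) := by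
          intro j
          induction j with
          | zero => intro _; simpa using hbase
          | succ j ih =>
            intro hj
            have hj' : j ≤ n - 2 := by omega
            have := hstep j hj'
            have := ih (by omega)
            omega
        have h1 := hgrow (n - 1) (le_refl _)
        have h2 := hupper (n - 1)
        omega
      obtain ⟨k, hk, hks⟩ := hstab
      have hEk : DEqAux M k p q := dEqAux_mono M hk hE'
      intro v
      exact dEqAux_of_stab M hks v.length p q hEk v (Nat.le_add_left _ _)
end
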